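/- Let f be analytic on the unit disk with Re f(z) < 1 and a_0 = f(0) \in [0,1). Then a_0^2 + \sum_{n=1}^\infty |a_n| r^n + |f(z) - a_0|^2 \le 1 holds for all |z| = r \le 1/3 if and only if a_0 \in [1/2, 1). -/

import Mathlib

open Metric Complex MeasureTheory Filter

/-- `∫_0^{2π} e^{imθ} dθ` equals `2π` for `m = 0` and `0` otherwise. -/
lemma intK (m : ℤ) :
    ∫ θ in (0:ℝ)..(2*Real.pi), Complex.exp (m * θ * Complex.I) =
      if m = 0 then (2*Real.pi : ℂ) else 0 := by
  rcases eq_or_ne m 0 with hm | hm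
  · simp [hm]
  · have h1 : ∀ θ : ℝ, (m : ℂ) * θ * Complex.I = (m * Complex.I) * θ := fun θ => by ring
    simp only [h1]
    rw [integral_exp_mul_complex (mul_ne_zero (Int.cast_ne_zero.2 hm) Complex.I_ne_zero)]
    have h2 : (m : ℂ) * Complex.I * ((2*Real.pi : ℝ) : ℂ) = m * (2 * Real.pi * Complex.I) := by
      push_cast; ring
    rw [h2, Complex.exp_int_mul_two_pi_mul_I]
    simp [hm]

lemma iocK (m : ℤ) :
    ∫ θ in Set.Ioc (0:ℝ) (2*Real.pi), Complex.exp (m * θ * Complex.I) =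
      if m = 0 then (2*Real.pi : ℂ) else 0 := by
  rw [← intervalIntegral.integral_of_le (by positivity)]
  exact intK m

lemma summable_abs_coeff {f : ℂ → ℂ} {a : ℕ → ℂ}
    (hsum : ∀ z ∈ ball (0 : ℂ) 1, HasSum (fun n => a n * z ^ n) (f z))
    {ρ : ℝ} (h0 : 0 ≤ ρ) (h1 : ρ < 1) :
    Summable (fun n => ‖a n‖ * ρ ^ n) := by
  set ρ' : ℝ := (1 + ρ)/2 with hρ'
  have hρ'0 : 0 < ρ' := by rw [hρ']; linarith
  have hρρ' : ρ < ρ' := by rw [hρ']; linarith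
  have hρ'1 : ρ' < 1 := by rw [hρ']; linarith
  have hz : ((ρ' : ℂ)) ∈ ball (0:ℂ) 1 := by
    rw [mem_ball_zero_iff]
    simpa [Complex.norm_real, Real.norm_eq_abs, abs_of_pos hρ'0] using hρ'1
  have hs := (hsum _ hz).summable
  obtain ⟨C, hC⟩ := (hs.tendsto_atTop_zero.norm.bddAbove_range)
  rw [mem_upperBounds] at hC
  have hCb : ∀ n : ℕ, ‖a n‖ * ρ' ^ n ≤ C := by
    intro n
    have := hC _ ⟨n, rfl⟩
    simpa [Complex.norm_real, Real.norm_eq_abs, abs_of_pos hρ'0, abs_pow] using this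
  refine Summable.of_nonneg_of_le (fun n => by positivity) (fun n => ?_)
    (((summable_geometric_of_lt_one (div_nonneg h0 hρ'0.le)
      ((div_lt_one hρ'0).2 hρρ')).mul_left C))
  have hpow : ρ ^ n = ρ' ^ n * (ρ/ρ') ^ n := by
    rw [← mul_pow]
    congr 1
    field_simp
  calc ‖a n‖ * ρ ^ n = (‖a n‖ * ρ' ^ n) * (ρ/ρ') ^ n := by
        rw [hpow]; ring
    _ ≤ C * (ρ/ρ') ^ n :=
        mul_le_mul_of_nonneg_right (hCb n) (by positivity)

lemma hasFPS {f : ℂ → ℂ} {a : ℕ → ℂ}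
    (hsum : ∀ z ∈ ball (0 : ℂ) 1, HasSum (fun n => a n * z ^ n) (f z)) :
    HasFPowerSeriesOnBall f (FormalMultilinearSeries.ofScalars ℂ a) 0 1 := by
  constructor
  · refine ENNReal.le_of_forall_nnreal_lt (fun r hr => ?_)
    have hr1 : (r : ℝ) < 1 := by exact_mod_cast hr
    apply FormalMultilinearSeries.le_radius_of_summable
    simp only [FormalMultilinearSeries.ofScalars_norm]
    exact summable_abs_coeff hsum r.coe_nonneg hr1
  · exact one_pos
  · intro y hy
    have hy' : ‖y‖ < 1 := by
      rw [Metric.mem_eball, edist_zero_right, ← ENNReal.coe_one, enorm_lt_coe] at hy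
      exact_mod_cast hy
    have := hsum y (mem_ball_zero_iff.2 hy')
    have hc : ∀ n, (FormalMultilinearSeries.ofScalars ℂ a).coeff n = a n := fun n => by
      have h2 := FormalMultilinearSeries.ofScalars_apply_eq (E := ℂ) a 1 n
      rw [FormalMultilinearSeries.coeff]
      simpa using h2
    simpa [hc, mul_comm] using this

lemma integral_coeff {f : ℂ → ℂ} {a : ℕ → ℂ}
    (hsum : ∀ z ∈ ball (0 : ℂ) 1, HasSum (fun n => a n * z ^ n) (f z))
    {ρ : ℝ} (h0 : 0 ≤ ρ) (h1 : ρ < 1) (k : ℤ) :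
    ∫ θ in Set.Ioc (0:ℝ) (2*Real.pi),
        f (ρ * Complex.exp (θ * Complex.I)) * Complex.exp (k * θ * Complex.I)
      = ∑' n : ℕ, a n * (ρ:ℂ)^n * (if (n:ℤ) + k = 0 then (2*Real.pi:ℂ) else 0) := by
  set F : ℕ → ℝ → ℂ :=
    fun n θ => a n * (ρ:ℂ)^n * Complex.exp ((((n:ℤ) + k : ℤ):ℂ) * θ * Complex.I) with hF
  have hFc : ∀ n, Continuous (F n) := by
    intro n
    exact continuous_const.mul (Complex.continuous_exp.comp
      ((continuous_const.mul Complex.continuous_ofReal).mul continuous_const))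
  have hmem : ∀ θ : ℝ, (ρ:ℂ) * Complex.exp (θ * Complex.I) ∈ ball (0:ℂ) 1 := by
    intro θ
    rw [mem_ball_zero_iff]
    simp only [norm_mul, Complex.norm_real, Real.norm_eq_abs,
      Complex.norm_exp_ofReal_mul_I, mul_one]
    rwa [_root_.abs_of_nonneg h0]
  have hterm : ∀ θ : ℝ, HasSum (fun n => F n θ)
      (f ((ρ:ℂ) * Complex.exp (θ * Complex.I)) * Complex.exp (k * θ * Complex.I)) := by
    intro θ
    have h := (hsum _ (hmem θ)).mul_right (Complex.exp (k * θ * Complex.I))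
    have heq : ∀ n : ℕ, a n * ((ρ:ℂ) * Complex.exp (θ * Complex.I))^n
        * Complex.exp (k * θ * Complex.I) = F n θ := by
      intro n
      simp only [hF]
      have e1 : ((((n:ℤ) + k : ℤ)):ℂ) * θ * Complex.I
          = (n:ℂ) * (θ * Complex.I) + (k:ℂ) * θ * Complex.I := by push_cast; ring
      rw [e1, Complex.exp_add, Complex.exp_nat_mul, mul_pow]
      ring
    exact (funext heq) ▸ h
  have hint : ∀ n, IntegrableOn (F n) (Set.Ioc 0 (2*Real.pi)) := fun n =>
    (hFc n).integrableOn_Ioc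
  have hnormpt : ∀ n, ∀ θ : ℝ, ‖F n θ‖ = ‖a n‖ * ρ^n := by
    intro n θ
    simp only [hF]
    have e2 : (((((n:ℤ) + k : ℤ)):ℂ) * θ * Complex.I).re = 0 := by simp
    simp [map_mul, map_pow, Complex.norm_real, Real.norm_eq_abs, Complex.norm_exp, e2,
      _root_.abs_of_nonneg h0]
  have hnorm : ∀ n, (∫ θ in Set.Ioc (0:ℝ) (2*Real.pi), ‖F n θ‖)
      = (‖a n‖ * ρ^n) * (2*Real.pi) := by
    intro n
    simp_rw [hnormpt n]
    rw [MeasureTheory.setIntegral_const, Real.volume_real_Ioc_of_le (by positivity), smul_eq_mul,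
      sub_zero]
    ring
  have hsummable : Summable fun n => ∫ θ in Set.Ioc (0:ℝ) (2*Real.pi), ‖F n θ‖ := by
    simp_rw [hnorm]
    exact (summable_abs_coeff hsum h0 h1).mul_right _
  have hswap := MeasureTheory.integral_tsum_of_summable_integral_norm hint hsummable
  have e : ∀ θ : ℝ, f ((ρ:ℂ) * Complex.exp (θ * Complex.I)) * Complex.exp (k * θ * Complex.I)
      = ∑' n, F n θ := fun θ => ((hterm θ).tsum_eq).symm
  calc ∫ θ in Set.Ioc (0:ℝ) (2*Real.pi),
        f ((ρ:ℂ) * Complex.exp (θ * Complex.I)) * Complex.exp (k * θ * Complex.I)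
      = ∫ θ in Set.Ioc (0:ℝ) (2*Real.pi), ∑' n, F n θ := by simp_rw [e]
    _ = ∑' n, ∫ θ in Set.Ioc (0:ℝ) (2*Real.pi), F n θ := hswap.symm
    _ = ∑' n : ℕ, a n * (ρ:ℂ)^n * (if (n:ℤ) + k = 0 then (2*Real.pi:ℂ) else 0) := by
        refine tsum_congr (fun n => ?_)
        simp only [hF]
        rw [MeasureTheory.integral_const_mul, iocK]

lemma coeff_bound {f : ℂ → ℂ} {a : ℕ → ℂ} {a₀ : ℝ}
    (hsum : ∀ z ∈ ball (0 : ℂ) 1, HasSum (fun n => a n * z ^ n) (f z))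
    (hre : ∀ z ∈ ball (0 : ℂ) 1, (f z).re < 1)
    (ha0 : a 0 = (a₀ : ℂ)) (m : ℕ) (hm : m ≠ 0) :
    ‖a m‖ ≤ 2 * (1 - a₀) := by
  have hball : Metric.eball (0:ℂ) 1 = ball (0:ℂ) 1 := by
    rw [← ENNReal.coe_one, Metric.emetric_ball_nnreal]
    norm_num
  have hfc : ContinuousOn f (ball (0:ℂ) 1) := by
    have := (hasFPS hsum).differentiableOn
    rw [hball] at this
    exact this.continuousOn
  have key : ∀ ρ : ℝ, 0 ≤ ρ → ρ < 1 → ‖a m‖ * ρ ^ m ≤ 2 * (1 - a₀) := by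
    intro ρ h0 h1
    set g : ℝ → ℂ := fun θ => f ((ρ:ℂ) * Complex.exp (θ * Complex.I)) with hg
    set c : ℝ → ℂ := fun θ => Complex.exp (((-(m:ℤ) : ℤ):ℂ) * θ * Complex.I) with hc
    have hmem : ∀ θ : ℝ, (ρ:ℂ) * Complex.exp (θ * Complex.I) ∈ ball (0:ℂ) 1 := by
      intro θ
      rw [mem_ball_zero_iff]
      simp only [norm_mul, Complex.norm_real, Real.norm_eq_abs,
        Complex.norm_exp_ofReal_mul_I, mul_one]
      rwa [_root_.abs_of_nonneg h0]
    have hgc : Continuous g := by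
      rw [hg]
      exact hfc.comp_continuous
        (continuous_const.mul (Complex.continuous_exp.comp
          (Complex.continuous_ofReal.mul continuous_const))) hmem
    have hcc : Continuous c := by
      rw [hc]
      exact Complex.continuous_exp.comp
        ((continuous_const.mul Complex.continuous_ofReal).mul continuous_const)
    -- integral identities
    have I1 : ∫ θ in Set.Ioc (0:ℝ) (2*Real.pi), g θ * c θ = (2*Real.pi:ℂ) * (a m * (ρ:ℂ)^m) := by
      have h := integral_coeff hsum h0 h1 (-(m:ℤ))
      rw [tsum_eq_single m ?_] at h
      · rw [hg, hc]
        rw [h]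
        simp
        ring
      · intro n hn
        rw [if_neg, mul_zero]
        omega
    have I2 : ∫ θ in Set.Ioc (0:ℝ) (2*Real.pi),
        g θ * Complex.exp ((((m:ℤ)):ℂ) * θ * Complex.I) = 0 := by
      have h := integral_coeff hsum h0 h1 ((m:ℤ))
      rw [hg]
      rw [h]
      have : ∀ n : ℕ, a n * (ρ:ℂ)^n * (if (n:ℤ) + (m:ℤ) = 0 then (2*Real.pi:ℂ) else 0) = 0 := by
        intro n
        rw [if_neg (by omega), mul_zero]
      simp_rw [this]
      exact tsum_zero
    have I0 : ∫ θ in Set.Ioc (0:ℝ) (2*Real.pi), g θ = (2*Real.pi:ℂ) * (a₀:ℂ) := by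
      have h := integral_coeff hsum h0 h1 0
      have e : ∀ θ : ℝ, f ((ρ:ℂ) * Complex.exp (θ * Complex.I))
          * Complex.exp (((0:ℤ):ℂ) * θ * Complex.I) = g θ := by
        intro θ; rw [hg]; simp
      rw [← funext e, h, tsum_eq_single 0 ?_]
      · rw [ha0]
        simp
        ring
      · intro n hn
        rw [if_neg (by omega), mul_zero]
    have hgint : IntegrableOn g (Set.Ioc 0 (2*Real.pi)) := hgc.integrableOn_Ioc
    have B : ∫ θ in Set.Ioc (0:ℝ) (2*Real.pi), (starRingEnd ℂ) (g θ) * c θ = 0 := by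
      have hconj : ∀ θ : ℝ, (starRingEnd ℂ) (g θ) * c θ
          = (starRingEnd ℂ) (g θ * Complex.exp ((((m:ℤ)):ℂ) * θ * Complex.I)) := by
        intro θ
        rw [map_mul]
        simp only [hc]
        congr 1
        rw [← Complex.exp_conj]
        congr 1
        simp
      simp_rw [hconj]
      rw [integral_conj, I2, map_zero]
    have C2 : ∫ θ in Set.Ioc (0:ℝ) (2*Real.pi), (2:ℂ) * c θ = 0 := by
      rw [MeasureTheory.integral_const_mul]
      simp only [hc]
      rw [iocK, if_neg (by omega), mul_zero]
    have hsplit : ∀ θ : ℝ, ((2*(g θ).re - 2 : ℝ):ℂ) * c θ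
        = g θ * c θ + ((starRingEnd ℂ) (g θ) * c θ - (2:ℂ) * c θ) := by
      intro θ
      have h2 : ((2*(g θ).re - 2 : ℝ):ℂ) = g θ + (starRingEnd ℂ) (g θ) - 2 := by
        rw [Complex.add_conj]
        push_cast
        ring
      rw [h2]
      ring
    have keyInt : ∫ θ in Set.Ioc (0:ℝ) (2*Real.pi), ((2*(g θ).re - 2 : ℝ):ℂ) * c θ
        = (2*Real.pi:ℂ) * (a m * (ρ:ℂ)^m) := by
      have hcgc : Continuous (fun θ => (starRingEnd ℂ) (g θ)) := RCLike.continuous_conj.comp hgc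
      have i1 : IntegrableOn (fun θ => g θ * c θ) (Set.Ioc 0 (2*Real.pi)) volume :=
        (hgc.mul hcc).integrableOn_Ioc
      have i2 : IntegrableOn (fun θ => (starRingEnd ℂ) (g θ) * c θ)
          (Set.Ioc 0 (2*Real.pi)) volume := (hcgc.mul hcc).integrableOn_Ioc
      have i3 : IntegrableOn (fun θ => (2:ℂ) * c θ) (Set.Ioc 0 (2*Real.pi)) volume :=
        (continuous_const.mul hcc).integrableOn_Ioc
      have i23 : IntegrableOn (fun θ => (starRingEnd ℂ) (g θ) * c θ - (2:ℂ) * c θ)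
          (Set.Ioc 0 (2*Real.pi)) volume := i2.sub i3
      simp_rw [hsplit]
      rw [MeasureTheory.integral_add i1 i23, MeasureTheory.integral_sub i2 i3, I1, B, C2]
      ring
    have hub : ∀ θ : ℝ, ‖((2*(g θ).re - 2 : ℝ):ℂ) * c θ‖ = 2 - 2*(g θ).re := by
      intro θ
      have h1 : ‖c θ‖ = 1 := by
        rw [hc, Complex.norm_exp]
        simp
      have h3 : 2*(g θ).re - 2 ≤ 0 := by
        have := hre _ (hmem θ)
        simp only [hg]
        linarith
      rw [norm_mul, h1, mul_one, Complex.norm_real, Real.norm_eq_abs, abs_of_nonpos h3]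
      ring
    have hnorm_int : ‖∫ θ in Set.Ioc (0:ℝ) (2*Real.pi), ((2*(g θ).re - 2 : ℝ):ℂ) * c θ‖
        ≤ ∫ θ in Set.Ioc (0:ℝ) (2*Real.pi), (2 - 2*(g θ).re) := by
      have h4 := MeasureTheory.norm_integral_le_integral_norm
        (μ := volume.restrict (Set.Ioc 0 (2*Real.pi)))
        (fun θ => ((2*(g θ).re - 2 : ℝ):ℂ) * c θ)
      simp_rw [hub] at h4
      exact h4
    have hre_int : ∫ θ in Set.Ioc (0:ℝ) (2*Real.pi), (g θ).re = 2*Real.pi*a₀ := by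
      have h5 := integral_re hgint
      rw [I0] at h5
      simpa using h5
    have hval : ∫ θ in Set.Ioc (0:ℝ) (2*Real.pi), (2 - 2*(g θ).re) = 4*Real.pi*(1 - a₀) := by
      have h7 : IntegrableOn (fun θ => 2*(g θ).re) (Set.Ioc 0 (2*Real.pi)) volume :=
        (continuous_const.mul (Complex.continuous_re.comp hgc)).integrableOn_Ioc
      have h8 : IntegrableOn (fun _ : ℝ => (2:ℝ)) (Set.Ioc 0 (2*Real.pi)) volume := continuous_const.integrableOn_Ioc
      rw [MeasureTheory.integral_sub h8 h7,
        MeasureTheory.integral_const_mul, hre_int, MeasureTheory.setIntegral_const,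
        Real.volume_real_Ioc_of_le (by positivity), smul_eq_mul, sub_zero]
      ring
    have habs : ‖(2*Real.pi:ℂ) * (a m * (ρ:ℂ)^m)‖ = 2*Real.pi*(‖a m‖ * ρ^m) := by
      simp only [norm_mul, map_mul, map_pow, Complex.norm_real, Real.norm_eq_abs,
        _root_.abs_of_nonneg h0, _root_.abs_of_pos Real.pi_pos, Complex.norm_two, norm_pow,
        Complex.norm_natCast]
    rw [keyInt, habs, hval] at hnorm_int
    nlinarith [Real.pi_pos]
  have ht : Filter.Tendsto (fun j : ℕ => ‖a m‖ * (1 - 1/((j:ℝ)+1)) ^ m) atTop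
      (nhds (‖a m‖)) := by
    have h6 : Filter.Tendsto (fun j : ℕ => (1 - 1/((j:ℝ)+1))) atTop (nhds 1) := by
      simpa using (tendsto_const_nhds (x := (1:ℝ))).sub tendsto_one_div_add_atTop_nhds_zero_nat
    simpa using ((h6.pow m).const_mul (‖a m‖))
  refine le_of_tendsto ht (Filter.Eventually.of_forall fun j => key _ ?_ ?_)
  · have : 1/((j:ℝ)+1) ≤ 1 := by
      rw [div_le_one (by positivity)]
      linarith
    linarith
  · have : 0 < 1/((j:ℝ)+1) := by positivity
    linarith

lemma f_zero {f : ℂ → ℂ} {a : ℕ → ℂ}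
    (hsum : ∀ z ∈ ball (0 : ℂ) 1, HasSum (fun n => a n * z ^ n) (f z)) :
    f 0 = a 0 := by
  have h := hsum 0 (by simp)
  have h2 : HasSum (fun n : ℕ => a n * (0:ℂ)^n) (a 0) := by
    have h3 : (fun n : ℕ => a n * (0:ℂ)^n) = fun n => if n = 0 then a 0 else 0 := by
      funext n
      rcases eq_or_ne n 0 with hn | hn <;> simp [hn, zero_pow]
    rw [h3]
    exact hasSum_ite_eq 0 (a 0)
  exact h.unique h2

lemma growth {f : ℂ → ℂ} {a : ℕ → ℂ} {a₀ : ℝ}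
    (hsum : ∀ z ∈ ball (0 : ℂ) 1, HasSum (fun n => a n * z ^ n) (f z))
    (hre : ∀ z ∈ ball (0 : ℂ) 1, (f z).re < 1)
    (ha0 : a 0 = (a₀ : ℂ)) (h1 : a₀ < 1) {z : ℂ} (hz : ‖z‖ ≤ 1/3) :
    ‖f z - (a₀:ℂ)‖ ≤ 1 - a₀ := by
  have hball : Metric.eball (0:ℂ) 1 = ball (0:ℂ) 1 := by
    rw [← ENNReal.coe_one, Metric.emetric_ball_nnreal]
    norm_num
  have hfd : DifferentiableOn ℂ f (ball (0:ℂ) 1) := by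
    rw [← hball]
    exact (hasFPS hsum).differentiableOn
  set w : ℂ → ℂ := fun u => (f u - (a₀:ℂ)) / (f u + (a₀:ℂ) - 2) with hw
  have hD : ∀ u ∈ ball (0:ℂ) 1, f u + (a₀:ℂ) - 2 ≠ 0 := by
    intro u hu h
    have h2 := congrArg Complex.re h
    simp only [Complex.add_re, Complex.sub_re, Complex.ofReal_re, Complex.zero_re] at h2
    have := hre u hu
    norm_num at h2
    linarith
  have hmaps : Set.MapsTo w (ball (0:ℂ) 1) (ball (0:ℂ) 1) := by
    intro u hu
    rw [mem_ball_zero_iff]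
    simp only [hw, norm_div]
    rw [div_lt_one (norm_pos_iff.2 (hD u hu))]
    have h5 : Complex.normSq (f u - (a₀:ℂ)) < Complex.normSq (f u + (a₀:ℂ) - 2) := by
      simp only [Complex.normSq_apply, Complex.sub_re, Complex.add_re, Complex.sub_im,
        Complex.add_im, Complex.ofReal_re, Complex.ofReal_im]
      have := hre u hu
      norm_num
      nlinarith
    rw [Complex.norm_def, Complex.norm_def]
    exact Real.sqrt_lt_sqrt (Complex.normSq_nonneg _) h5
  have hf0 : f 0 = (a₀:ℂ) := by rw [f_zero hsum, ha0]
  have hw0 : w 0 = 0 := by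
    simp only [hw, hf0]
    simp
  have hwd : DifferentiableOn ℂ w (ball (0:ℂ) 1) := by
    exact DifferentiableOn.div (hfd.sub (differentiableOn_const _))
      ((hfd.add (differentiableOn_const _)).sub (differentiableOn_const _)) hD
  have hz1 : ‖z‖ < 1 := lt_of_le_of_lt hz (by norm_num)
  have hzb : z ∈ ball (0:ℂ) 1 := mem_ball_zero_iff.2 hz1
  have hsch : ‖w z‖ ≤ ‖z‖ :=
    Complex.norm_le_norm_of_mapsTo_ball hwd (hmaps.mono_right ball_subset_closedBall) hw0 hz1
  have hid : (f z - (a₀:ℂ)) * (1 - w z) = -((2:ℂ) - 2*(a₀:ℂ)) * w z := by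
    have hDz := hD z hzb
    simp only [hw]
    field_simp
    ring
  have habs := congrArg (‖·‖) hid
  rw [norm_mul, norm_mul] at habs
  have h6 : ‖-((2:ℂ) - 2*(a₀:ℂ))‖ = 2 - 2*a₀ := by
    have h7 : -((2:ℂ) - 2*(a₀:ℂ)) = ((2*a₀ - 2 : ℝ):ℂ) := by push_cast; ring
    rw [h7, Complex.norm_real, Real.norm_eq_abs, abs_of_nonpos (by linarith)]
    ring
  rw [h6] at habs
  have hW : ‖w z‖ ≤ 1/3 := le_trans hsch hz
  have hB : (2:ℝ)/3 ≤ ‖1 - w z‖ := by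
    have h8 := norm_sub_norm_le (1:ℂ) (w z)
    simp only [norm_one] at h8
    linarith
  nlinarith [norm_nonneg (f z - (a₀:ℂ)), norm_nonneg (w z),
    norm_nonneg (1 - w z)]

/-- For `a₀ ∈ [0,1)`: the inequality
`a₀² + ∑_{n≥1} |aₙ| rⁿ + |f(z)-a₀|² ≤ 1` for all `|z| = r ≤ 1/3` holds for every
analytic `f` on the unit disk with `Re f < 1` and `f(0) = a₀` iff `a₀ ∈ [1/2,1)`. -/
theorem bohr_P_rogosinski_sq_iff (a₀ : ℝ) (h0 : 0 ≤ a₀) (h1 : a₀ < 1) :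
    (∀ (f : ℂ → ℂ) (a : ℕ → ℂ),
        (∀ z ∈ ball (0 : ℂ) 1, HasSum (fun n => a n * z ^ n) (f z)) →
        (∀ z ∈ ball (0 : ℂ) 1, (f z).re < 1) →
        a 0 = (a₀ : ℂ) →
        ∀ z : ℂ, ‖z‖ ≤ 1 / 3 →
          a₀ ^ 2 + ∑' n : ℕ, ‖a (n + 1)‖ * ‖z‖ ^ (n + 1)
            + ‖f z - (a₀ : ℂ)‖ ^ 2 ≤ 1)
      ↔ 1 / 2 ≤ a₀ := by
  constructor
  · intro h
    set c : ℂ := ((2*a₀ - 2 : ℝ):ℂ) with hcdef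
    set F : ℂ → ℂ := fun z => (a₀:ℂ) + c * (z / (1 - z)) with hFdef
    set A : ℕ → ℂ := fun n => if n = 0 then (a₀:ℂ) else c with hAdef
    have hA0 : A 0 = (a₀:ℂ) := by simp [hAdef]
    have hAsum : ∀ z ∈ ball (0:ℂ) 1, HasSum (fun n => A n * z^n) (F z) := by
      intro z hz
      rw [mem_ball_zero_iff] at hz
      have hgeo : HasSum (fun n : ℕ => z^n) (1 - z)⁻¹ := hasSum_geometric_of_norm_lt_one hz
      have h2 : HasSum (fun n : ℕ => (c*z) * z^n) ((c*z) * (1 - z)⁻¹) := hgeo.mul_left _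
      have h3 : ∀ n : ℕ, (c*z) * z^n = A (n+1) * z^(n+1) := by
        intro n
        simp only [hAdef, Nat.succ_ne_zero, if_false, pow_succ]
        ring
      rw [funext h3] at h2
      have h4 := (hasSum_nat_add_iff (f := fun n => A n * z^n) 1).1 h2
      convert h4 using 1
      case e'_3 => rfl
      simp only [hFdef, Finset.sum_range_one, hA0, pow_zero, mul_one, div_eq_mul_inv]
      ring
    have hRe : ∀ z ∈ ball (0:ℂ) 1, (F z).re < 1 := by
      intro z hz
      rw [mem_ball_zero_iff] at hz
      have hz1 : (1:ℂ) - z ≠ 0 := by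
        intro h'
        rw [sub_eq_zero] at h'
        rw [← h'] at hz
        simp at hz
      have hN : 0 < Complex.normSq (1 - z) := Complex.normSq_pos.2 hz1
      have hnz : Complex.normSq z < 1 := by
        rw [← Complex.sq_norm]
        have : ‖z‖ < 1 := hz
        nlinarith [norm_nonneg z]
      have ht : -(1/2 : ℝ) < (z / (1-z)).re := by
        rw [Complex.div_re, ← add_div, lt_div_iff₀ hN]
        simp only [Complex.sub_re, Complex.sub_im, Complex.one_re, Complex.one_im,
          Complex.normSq_apply] at *
        nlinarith [hnz]
      have hFre : (F z).re = a₀ + (2*a₀-2) * (z/(1-z)).re := by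
        simp only [hFdef, hcdef, Complex.add_re, Complex.mul_re, Complex.ofReal_re,
          Complex.ofReal_im]
        ring
      rw [hFre]
      nlinarith [ht]
    have habs13 : ‖((1/3:ℝ):ℂ)‖ = 1/3 := by
      rw [Complex.norm_real, Real.norm_eq_abs]
      norm_num
    have hmain := h F A hAsum hRe hA0 ((1/3:ℝ):ℂ) (le_of_eq habs13)
    have hAn : ∀ n : ℕ, ‖A (n+1)‖ = 2 - 2*a₀ := by
      intro n
      simp only [hAdef, Nat.succ_ne_zero, if_false, hcdef, Complex.norm_real, Real.norm_eq_abs]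
      rw [abs_of_nonpos (by linarith)]
      ring
    rw [habs13] at hmain
    simp_rw [hAn] at hmain
    have htsum : ∑' n : ℕ, (2 - 2*a₀) * (1/3:ℝ)^(n+1) = 1 - a₀ := by
      rw [tsum_mul_left]
      have hgs : ∑' n : ℕ, (1/3:ℝ)^(n+1) = 1/2 := by
        have hc : ∀ n : ℕ, (1/3:ℝ)^(n+1) = (1/3) * (1/3:ℝ)^n := fun n => by
          rw [pow_succ]; ring
        rw [funext hc, tsum_mul_left,
          tsum_geometric_of_lt_one (by norm_num) (by norm_num : (1/3:ℝ) < 1)]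
        norm_num
      rw [hgs]
      ring
    rw [htsum] at hmain
    have hF13 : F ((1/3:ℝ):ℂ) - (a₀:ℂ) = c * (1/2) := by
      simp only [hFdef]
      have he : ((1/3:ℝ):ℂ) / (1 - ((1/3:ℝ):ℂ)) = 1/2 := by norm_num
      rw [he]
      ring
    have habsF : ‖F ((1/3:ℝ):ℂ) - (a₀:ℂ)‖ = 1 - a₀ := by
      rw [hF13, norm_mul, hcdef, Complex.norm_real, Real.norm_eq_abs, abs_of_nonpos (by linarith)]
      have : ‖(1:ℂ)/2‖ = 1/2 := by norm_num
      rw [this]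
      ring
    rw [habsF] at hmain
    nlinarith [hmain]
  · intro ha f a hsum hre ha0 z hz
    have hz1 : ‖z‖ < 1 := lt_of_le_of_lt hz (by norm_num)
    have habsnn : (0:ℝ) ≤ ‖z‖ := norm_nonneg z
    have hS : ∑' n : ℕ, ‖a (n+1)‖ * ‖z‖ ^ (n+1) ≤ 1 - a₀ := by
      have hsumm : Summable (fun n => ‖a n‖ * ‖z‖ ^ n) :=
        summable_abs_coeff hsum habsnn hz1
      have hsumm1 : Summable (fun n => ‖a (n+1)‖ * ‖z‖ ^ (n+1)) :=
        (summable_nat_add_iff (f := fun n => ‖a n‖ * ‖z‖ ^ n) 1).2 hsumm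
      have hpows : Summable (fun n : ℕ => ‖z‖ ^ (n+1)) :=
        (summable_nat_add_iff (f := fun n => ‖z‖ ^ n) 1).2
          (summable_geometric_of_lt_one habsnn hz1)
      have hgeo : Summable (fun n : ℕ => (2*(1-a₀)) * ‖z‖ ^ (n+1)) :=
        hpows.mul_left _
      have hle : ∑' n : ℕ, ‖a (n+1)‖ * ‖z‖ ^ (n+1)
          ≤ ∑' n : ℕ, (2*(1-a₀)) * ‖z‖ ^ (n+1) := by
        refine Summable.tsum_le_tsum (fun n => ?_) hsumm1 hgeo
        exact mul_le_mul_of_nonneg_right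
          (coeff_bound hsum hre ha0 (n+1) (Nat.succ_ne_zero n)) (by positivity)
      have hval : ∑' n : ℕ, (2*(1-a₀)) * ‖z‖ ^ (n+1) ≤ 1 - a₀ := by
        rw [tsum_mul_left]
        have he : ∑' n : ℕ, ‖z‖ ^ (n+1)
            = ‖z‖ * (1 - ‖z‖)⁻¹ := by
          have hc : ∀ n : ℕ, ‖z‖ ^ (n+1)
              = ‖z‖ * ‖z‖ ^ n := fun n => by rw [pow_succ]; ring
          rw [funext hc, tsum_mul_left, tsum_geometric_of_lt_one habsnn hz1]
        rw [he]
        have h23 : (2:ℝ)/3 ≤ 1 - ‖z‖ := by linarith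
        have hinv : (1 - ‖z‖)⁻¹ ≤ 3/2 := by
          rw [show (3:ℝ)/2 = ((2:ℝ)/3)⁻¹ by norm_num]
          exact inv_anti₀ (by norm_num) h23
        have : ‖z‖ * (1 - ‖z‖)⁻¹ ≤ (1/3) * (3/2) :=
          mul_le_mul hz hinv (by positivity) (by norm_num)
        nlinarith
      linarith
    have hT : ‖f z - (a₀:ℂ)‖ ≤ 1 - a₀ := growth hsum hre ha0 h1 hz
    have hT2 : ‖f z - (a₀:ℂ)‖^2 ≤ (1-a₀)^2 :=
      pow_le_pow_left₀ (norm_nonneg _) hT 2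
    nlinarith [mul_nonneg (by linarith : (0:ℝ) ≤ 2*a₀ - 1) (by linarith : (0:ℝ) ≤ 1 - a₀)]
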